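/- Let N be a compact, connected, nonorientable surface of genus g with n boundary components, g + n ≥ 5. Then there exists an increasing sequence E_1 ⊂ E_2 ⊂ … ⊂ E_k ⊂ … of subcomplexes of C(N) such that each E_k is a finite rigid subcomplex of C(N), each E_k has trivial pointwise stabilizer in Mod(N), and the union of all E_k is C(N). Moreover, such a sequence is obtained by setting E_1 = B (the finite rigid set containing curves of every topological type) and E_k = E_{k-1} ∪ ⋃_{f ∈ G} ( f(E_{k-1}) ∪ f^{-1}(E_{k-1}) ) for k ≥ 2, where G is a finite generating set of Mod(N) as in Lemma 3.11. -/
import Mathlib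


/-!
An abstract model of the curve complex `C(N)` of a compact, connected,
nonorientable surface `N`, together with the action of its mapping class
group `Mod(N)`.

* `V` is the set of vertices of `C(N)`, i.e. isotopy classes of nontrivial
  simple closed curves on `N` (curves that do not bound a disk, do not bound
  a Möbius band, and are not isotopic to a boundary component).
* `adj u v` records that the distinct classes `u, v` admit disjoint
  representatives, i.e. `{u, v}` is an edge (1-simplex) of `C(N)`; since the
  curve complex is a flag complex, simplices are exactly the finite sets of
  pairwise adjacent vertices, so this determines the whole complex.
* `MCG` is the mapping class group of `N` (isotopy classes of
  self-homeomorphisms), acting simplicially on `C(N)` via `act`,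
  `[h]⋆([a]) = [h(a)]`.
-/
structure CurveComplexData where
  V : Type
  adj : V → V → Prop
  adj_symm : ∀ {u v : V}, adj u v → adj v u
  adj_irrefl : ∀ v : V, ¬ adj v v
  MCG : Type
  [mcgGroup : Group MCG]
  act : MCG →* Equiv.Perm V
  act_adj : ∀ (h : MCG) {u v : V}, adj u v → adj (act h u) (act h v)

attribute [instance] CurveComplexData.mcgGroup

namespace CurveComplexData

variable (C : CurveComplexData)

/-- The star of a vertex `v` in the (full) subcomplex of `C(N)` spanned by the
set of vertices `B`: the vertices of the simplices of `B` containing `v`. -/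
def star (B : Set C.V) (v : C.V) : Set C.V := {u ∈ B | u = v ∨ C.adj u v}

/-- `lam` is a simplicial map on the subcomplex spanned by `B`:
it sends simplices to simplices. -/
def SimplicialOn (B : Set C.V) (lam : C.V → C.V) : Prop :=
  ∀ u ∈ B, ∀ v ∈ B, C.adj u v → lam u = lam v ∨ C.adj (lam u) (lam v)

/-- `lam` is locally injective on `B`: it is injective on the star of every
vertex of `B`. -/
def LocallyInjectiveOn (B : Set C.V) (lam : C.V → C.V) : Prop :=
  ∀ v ∈ B, Set.InjOn lam (C.star B v)

/-- `lam` is induced on `B` by a (mapping class of a) homeomorphism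
`h : N → N`, i.e. `[h]⋆(α) = lam α` for every vertex `α` of `B`. -/
def InducedBy (B : Set C.V) (lam : C.V → C.V) : Prop :=
  ∃ h : C.MCG, ∀ v ∈ B, C.act h v = lam v

/-- `B` is rigid: every locally injective simplicial map `B → C(N)` is
induced by a homeomorphism of `N`. -/
def Rigid (B : Set C.V) : Prop :=
  ∀ lam : C.V → C.V, C.SimplicialOn B lam → C.LocallyInjectiveOn B lam →
    C.InducedBy B lam

/-- The pointwise stabilizer of a set `B` of vertices in the mapping class
group: the subgroup of elements fixing every vertex of `B`. -/
def fix (B : Set C.V) : Subgroup C.MCG where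
  carrier := {h | ∀ v ∈ B, C.act h v = v}
  one_mem' := by intro v _; simp
  mul_mem' := by
    intro a b ha hb v hv
    rw [map_mul, Equiv.Perm.mul_apply, hb v hv, ha v hv]
  inv_mem' := by
    intro a ha v hv
    have h1 := ha v hv
    conv_lhs => rw [← h1]
    rw [← Equiv.Perm.mul_apply, ← map_mul, inv_mul_cancel, map_one,
      Equiv.Perm.one_apply]

/-- `E` is an exhaustion of `C(N)` by finite rigid sets: an increasing
sequence of finite rigid subcomplexes whose union is all of `C(N)`. -/
def ExhaustionByFiniteRigidSets (E : ℕ → Set C.V) : Prop :=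
  (∀ k, E k ⊆ E (k + 1)) ∧ (∀ k, (E k).Finite ∧ C.Rigid (E k)) ∧
    (⋃ k, E k) = Set.univ

end CurveComplexData


namespace IK

/-- The representative in `{1, …, m}` of an integer `k` modulo `m`
(cyclic index convention for the labels `1, …, g+n`). -/
def cyc (m : ℕ) (k : ℤ) : ℕ := ((k - 1) % (m : ℤ)).toNat + 1

/-- Valid index for the one-sided curves `a_i`: `1 ≤ i ≤ g`. -/
def validA (g n i : ℕ) : Prop := 1 ≤ i ∧ i ≤ g

/-- Valid indices for the one-sided curves `a_{i,j}`:
`1 ≤ i ≤ g`, `1 ≤ j ≤ g+n`, `j ≠ i`, `j ≠ i−1 (mod g+n)`. -/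
def validAA (g n i j : ℕ) : Prop :=
  1 ≤ i ∧ i ≤ g ∧ 1 ≤ j ∧ j ≤ g + n ∧ j ≠ i ∧
    j % (g + n) ≠ (i - 1) % (g + n)

/-- Valid indices for the two-sided curves `b_{i,j}`:
`1 ≤ i, j ≤ g+n` and `2 ≤ |i−j| ≤ g+n−2`. -/
def validB (g n i j : ℕ) : Prop :=
  1 ≤ i ∧ i ≤ g + n ∧ 1 ≤ j ∧ j ≤ g + n ∧
    2 ≤ |(i : ℤ) - (j : ℤ)| ∧ |(i : ℤ) - (j : ℤ)| ≤ (g : ℤ) + (n : ℤ) - 2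

variable (C : CurveComplexData)

/-- The Ilbira–Korkmaz configuration
`B₁ = X = {a_i, a_{i,j}} ∪ {b_{i,j}}` (for the valid index ranges). -/
def B1 (g n : ℕ) (a : ℕ → C.V) (aa bb : ℕ → ℕ → C.V) : Set C.V :=
  {t | (∃ i, validA g n i ∧ t = a i) ∨ (∃ i j, validAA g n i j ∧ t = aa i j) ∨
    (∃ i j, validB g n i j ∧ t = bb i j)}

/-- `B₂ = {w₁, …, w_{g+n}, r₁, …, r_{g+n}}` (curves of Figure 5). -/
def B2 (g n : ℕ) (w r : ℕ → C.V) : Set C.V :=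
  {t | ∃ i, 1 ≤ i ∧ i ≤ g + n ∧ (t = w i ∨ t = r i)}

/-- `B₃ = {u₁, …, u_{g−1}, v₁, …, v_{g−1}, x₂, …, x_g}` (curves of Figure 7). -/
def B3 (g : ℕ) (u v x : ℕ → C.V) : Set C.V :=
  {t | (∃ i, 1 ≤ i ∧ i ≤ g - 1 ∧ (t = u i ∨ t = v i)) ∨
    (∃ i, 2 ≤ i ∧ i ≤ g ∧ t = x i)}

/-- `B₄ = {c₁, …, c_{g−1}, d_{1,2}, …, d_{g−1,g}, u_{1,o}, …, u_{g−1,o},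
v_{2,o}, …, v_{g,o}}` (curves of Figures 8 and 9); here `d i` stands for
`d_{i,i+1}`. -/
def B4 (g : ℕ) (c d uo vo : ℕ → C.V) : Set C.V :=
  {t | (∃ i, 1 ≤ i ∧ i ≤ g - 1 ∧ (t = c i ∨ t = d i ∨ t = uo i)) ∨
    (∃ i, 2 ≤ i ∧ i ≤ g ∧ t = vo i)}

/-- `B₅ = {k₁, …, k_{g−1}, p₁, …, p_{g−1}, e_{1,2}, …, e_{g−1,g}, l₂, …, l_g,
r_{1,2}, …, r_{g−1,g}, y₂, …, y_g, s_{1,2}, …, s_{g−1,g}}` (curves of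
Figure 10); here `e i`, `rr i`, `s i` stand for `e_{i,i+1}`, `r_{i,i+1}`,
`s_{i,i+1}`. -/
def B5 (g : ℕ) (k p e rr s l y : ℕ → C.V) : Set C.V :=
  {t | (∃ i, 1 ≤ i ∧ i ≤ g - 1 ∧
          (t = k i ∨ t = p i ∨ t = e i ∨ t = rr i ∨ t = s i)) ∨
    (∃ i, 2 ≤ i ∧ i ≤ g ∧ (t = l i ∨ t = y i))}

end IK

namespace CurveComplexData

variable (C : CurveComplexData)

lemma star_mono' {A B : Set C.V} (h : A ⊆ B) (v : C.V) :
    C.star A v ⊆ C.star B v := fun u hu => ⟨h hu.1, hu.2⟩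

lemma simplicialOn_mono' {A B : Set C.V} (h : A ⊆ B) {lam : C.V → C.V}
    (hs : C.SimplicialOn B lam) : C.SimplicialOn A lam :=
  fun u hu v hv => hs u (h hu) v (h hv)

lemma locInj_mono' {A B : Set C.V} (h : A ⊆ B) {lam : C.V → C.V}
    (hs : C.LocallyInjectiveOn B lam) : C.LocallyInjectiveOn A lam :=
  fun v hv => ((hs v (h hv)).mono (C.star_mono' h v))

lemma simplicialOn_comp' (φ : C.MCG) {S : Set C.V} {lam : C.V → C.V}
    (hs : C.SimplicialOn (⇑(C.act φ) '' S) lam) :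
    C.SimplicialOn S (lam ∘ ⇑(C.act φ)) := fun u hu v hv hadj =>
  hs _ ⟨u, hu, rfl⟩ _ ⟨v, hv, rfl⟩ (C.act_adj φ hadj)

lemma locInj_comp' (φ : C.MCG) {S : Set C.V} {lam : C.V → C.V}
    (hs : C.LocallyInjectiveOn (⇑(C.act φ) '' S) lam) :
    C.LocallyInjectiveOn S (lam ∘ ⇑(C.act φ)) := by
  intro v hv u hu u' hu' heq
  have hmap : ∀ w ∈ C.star S v,
      C.act φ w ∈ C.star (⇑(C.act φ) '' S) (C.act φ v) := by
    intro w hw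
    exact ⟨⟨w, hw.1, rfl⟩,
      hw.2.elim (fun h => Or.inl (by rw [h])) (fun h => Or.inr (C.act_adj φ h))⟩
  exact (C.act φ).injective
    (hs (C.act φ v) ⟨v, hv, rfl⟩ (hmap u hu) (hmap u' hu') heq)

lemma act_inv_act' (f : C.MCG) (v : C.V) : C.act f⁻¹ (C.act f v) = v := by
  rw [← Equiv.Perm.mul_apply, ← map_mul, inv_mul_cancel, map_one,
    Equiv.Perm.one_apply]

lemma act_act_inv' (f : C.MCG) (v : C.V) : C.act f (C.act f⁻¹ v) = v := by
  rw [← Equiv.Perm.mul_apply, ← map_mul, mul_inv_cancel, map_one,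
    Equiv.Perm.one_apply]

lemma mem_fix_iff' {L : Set C.V} {h : C.MCG} :
    h ∈ C.fix L ↔ ∀ v ∈ L, C.act h v = v := Iff.rfl

lemma fix_antitone' {A B : Set C.V} (h : A ⊆ B) : C.fix B ≤ C.fix A :=
  fun g hg v hv => hg v (h hv)

lemma eq_of_agree' {L : Set C.V} (h : C.fix L = ⊥) {h1 h2 : C.MCG}
    (hag : ∀ v ∈ L, C.act h1 v = C.act h2 v) : h1 = h2 := by
  have hm : h2⁻¹ * h1 ∈ C.fix L := by
    intro v hv
    rw [map_mul, Equiv.Perm.mul_apply, hag v hv, ← Equiv.Perm.mul_apply,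
      ← map_mul, inv_mul_cancel, map_one, Equiv.Perm.one_apply]
  rw [h, Subgroup.mem_bot] at hm
  exact (inv_mul_eq_one.mp hm).symm

lemma fix_image_eq_bot' {L : Set C.V} (f : C.MCG) (h : C.fix L = ⊥) :
    C.fix (⇑(C.act f) '' L) = ⊥ := by
  rw [eq_bot_iff] at h ⊢
  intro g hg
  have hmem : f⁻¹ * g * f ∈ C.fix L := by
    intro v hv
    rw [map_mul, map_mul, Equiv.Perm.mul_apply, Equiv.Perm.mul_apply,
      hg (C.act f v) ⟨v, hv, rfl⟩, C.act_inv_act']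
  have := h hmem
  rw [Subgroup.mem_bot] at this ⊢
  have : g * f = f := by
    have h2 : f * (f⁻¹ * g * f) = f * 1 := by rw [this]
    rwa [← mul_assoc, ← mul_assoc, mul_inv_cancel, one_mul, mul_one] at h2
  exact mul_right_cancel (by rwa [one_mul])

lemma rigid_step' (G : Finset C.MCG) (B S : Set C.V) (hBS : B ⊆ S)
    (hS : C.Rigid S)
    (hL : ∀ f ∈ G, ∃ L ⊆ B, C.fix L = ⊥ ∧ ⇑(C.act f) '' L ⊆ B) :
    C.Rigid (S ∪ ⋃ f ∈ (G : Set C.MCG),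
      (⇑(C.act f) '' S ∪ ⇑(C.act f⁻¹) '' S)) := by
  intro lam hsimp hlinj
  set T := S ∪ ⋃ f ∈ (G : Set C.MCG),
      (⇑(C.act f) '' S ∪ ⇑(C.act f⁻¹) '' S) with hT
  have hST : S ⊆ T := Set.subset_union_left
  obtain ⟨h, hh⟩ := hS lam (C.simplicialOn_mono' hST hsimp)
    (C.locInj_mono' hST hlinj)
  refine ⟨h, ?_⟩
  intro t ht
  rcases ht with htS | htU
  · exact (hh t htS)
  · simp only [Set.mem_iUnion] at htU
    obtain ⟨f, hf, ht⟩ := htU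
    have hfG : f ∈ G := hf
    obtain ⟨L, hLB, hfixL, hfLB⟩ := hL f hfG
    have hfsub : ⇑(C.act f) '' S ⊆ T := fun u hu =>
      Or.inr (Set.mem_biUnion hf (Or.inl hu))
    have hfisub : ⇑(C.act f⁻¹) '' S ⊆ T := fun u hu =>
      Or.inr (Set.mem_biUnion hf (Or.inr hu))
    rcases ht with ⟨v, hvS, rfl⟩ | ⟨v, hvS, rfl⟩
    · obtain ⟨h1, hh1⟩ := hS (lam ∘ ⇑(C.act f))
        (C.simplicialOn_comp' f (C.simplicialOn_mono' hfsub hsimp))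
        (C.locInj_comp' f (C.locInj_mono' hfsub hlinj))
      have heq : h1 = h * f := by
        refine C.eq_of_agree' hfixL (fun w hw => ?_)
        have e1 : C.act h1 w = lam (C.act f w) := hh1 w (hBS (hLB hw))
        have e2 : lam (C.act f w) = C.act h (C.act f w) :=
          (hh _ (hBS (hfLB ⟨w, hw, rfl⟩))).symm
        rw [e1, e2, map_mul, Equiv.Perm.mul_apply]
      calc C.act h (C.act f v) = C.act (h * f) v := by
            rw [map_mul, Equiv.Perm.mul_apply]
        _ = C.act h1 v := by rw [heq]
        _ = lam (C.act f v) := hh1 v hvS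
    · obtain ⟨h2, hh2⟩ := hS (lam ∘ ⇑(C.act f⁻¹))
        (C.simplicialOn_comp' f⁻¹ (C.simplicialOn_mono' hfisub hsimp))
        (C.locInj_comp' f⁻¹ (C.locInj_mono' hfisub hlinj))
      have hfixfL : C.fix (⇑(C.act f) '' L) = ⊥ := C.fix_image_eq_bot' f hfixL
      have heq : h2 = h * f⁻¹ := by
        refine C.eq_of_agree' hfixfL (fun w hw => ?_)
        obtain ⟨u, huL, rfl⟩ := hw
        have e1 : C.act h2 (C.act f u) = lam (C.act f⁻¹ (C.act f u)) :=
          hh2 _ (hBS (hfLB ⟨u, huL, rfl⟩))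
        rw [C.act_inv_act'] at e1
        rw [e1, ← hh u (hBS (hLB huL)), map_mul, Equiv.Perm.mul_apply,
          C.act_inv_act']
      calc C.act h (C.act f⁻¹ v) = C.act (h * f⁻¹) v := by
            rw [map_mul, Equiv.Perm.mul_apply]
        _ = C.act h2 v := by rw [heq]
        _ = lam (C.act f⁻¹ v) := hh2 v hvS

end CurveComplexData

/-- **Theorem 3.12.** Let `N` be a compact, connected, nonorientable surface
of genus `g` with `n` boundary components, `g + n ≥ 5`.  Let `B` be the
finite rigid set containing `B₁ ∪ … ∪ B₅` and curves of every topological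
type, and let `G` be a finite generating set of `Mod(N)` such that for each
`f ∈ G` there is `L_f ⊆ B` with trivial pointwise stabilizer and
`f(L_f) ⊆ B` (Lemma 3.11).  Then there is an increasing sequence
`E₁ ⊆ E₂ ⊆ …` of subcomplexes of `C(N)` such that each `Eₖ` is a finite
rigid set with trivial pointwise stabilizer in `Mod(N)` and `⋃ₖ Eₖ = C(N)`;
moreover such a sequence is obtained by setting `E₁ = B` and
`Eₖ = E_{k−1} ∪ ⋃_{f ∈ G} (f(E_{k−1}) ∪ f⁻¹(E_{k−1}))` for `k ≥ 2`. -/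
theorem theorem_3_12 (g n : ℕ) (hgn : 5 ≤ g + n) (C : CurveComplexData)
    (a : ℕ → C.V) (aa bb : ℕ → ℕ → C.V) (w r : ℕ → C.V)
    (u v x : ℕ → C.V) (c d uo vo : ℕ → C.V)
    (k p e rr s l y : ℕ → C.V)
    (B : Set C.V)
    (hsub :
      (IK.B1 C g n a aa bb ∪ IK.B2 C g n w r ∪ IK.B3 C g u v x ∪
        IK.B4 C g c d uo vo ∪ IK.B5 C g k p e rr s l y) ⊆ B)
    (hfin : B.Finite) (hrigid : C.Rigid B)
    (htype : ∀ t : C.V, ∃ b ∈ B, ∃ h : C.MCG, C.act h b = t)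
    (G : Finset C.MCG)
    (hGen : Subgroup.closure (G : Set C.MCG) = ⊤)
    (hL : ∀ f ∈ G, ∃ L ⊆ B, C.fix L = ⊥ ∧ ⇑(C.act f) '' L ⊆ B) :
    (∃ E : ℕ → Set C.V,
      (∀ m, E m ⊆ E (m + 1)) ∧
      (∀ m, (E m).Finite ∧ C.Rigid (E m) ∧ C.fix (E m) = ⊥) ∧
      (⋃ m, E m) = Set.univ) ∧
    (∀ E : ℕ → Set C.V, E 0 = B →
      (∀ m, E (m + 1) = E m ∪
        ⋃ f ∈ (G : Set C.MCG), (⇑(C.act f) '' E m ∪ ⇑(C.act f⁻¹) '' E m)) →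
      (∀ m, E m ⊆ E (m + 1)) ∧
      (∀ m, (E m).Finite ∧ C.Rigid (E m) ∧ C.fix (E m) = ⊥) ∧
      (⋃ m, E m) = Set.univ) := by
  have key : ∀ E : ℕ → Set C.V, E 0 = B →
      (∀ m, E (m + 1) = E m ∪
        ⋃ f ∈ (G : Set C.MCG), (⇑(C.act f) '' E m ∪ ⇑(C.act f⁻¹) '' E m)) →
      (∀ m, E m ⊆ E (m + 1)) ∧
      (∀ m, (E m).Finite ∧ C.Rigid (E m) ∧ C.fix (E m) = ⊥) ∧
      (⋃ m, E m) = Set.univ := by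
    intro E hE0 hrec
    have hmono : ∀ m, E m ⊆ E (m + 1) := fun m =>
      (hrec m) ▸ Set.subset_union_left
    have hBsub : ∀ m, B ⊆ E m := by
      intro m
      induction m with
      | zero => rw [hE0]
      | succ m ih => exact ih.trans (hmono m)
    have hfr : ∀ m, (E m).Finite ∧ C.Rigid (E m) := by
      intro m
      induction m with
      | zero => rw [hE0]; exact ⟨hfin, hrigid⟩
      | succ m ih =>
        rw [hrec m]
        refine ⟨ih.1.union (Set.Finite.biUnion G.finite_toSet
          fun f _ => ((ih.1.image _).union (ih.1.image _))), ?_⟩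
        exact C.rigid_step' G B (E m) (hBsub m) ih.2 hL
    have hfix : ∀ m, C.fix (E m) = ⊥ := by
      intro m
      rcases G.eq_empty_or_nonempty with hGe | ⟨f, hf⟩
      · have htop : (⊤ : Subgroup C.MCG) = ⊥ := by
          rw [← hGen, hGe]
          simp
        exact le_bot_iff.mp (htop ▸ le_top)
      · obtain ⟨L, hLB, hfixL, _⟩ := hL f hf
        exact le_bot_iff.mp (hfixL ▸ C.fix_antitone' (hLB.trans (hBsub m)))
    refine ⟨hmono, fun m => ⟨(hfr m).1, (hfr m).2, hfix m⟩, ?_⟩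
    set U := ⋃ m, E m with hU
    have hGU : ∀ f ∈ G, ∀ v ∈ U, C.act f v ∈ U ∧ C.act f⁻¹ v ∈ U := by
      intro f hf v hv
      obtain ⟨m, hm⟩ : ∃ m, v ∈ E m := Set.mem_iUnion.mp hv
      constructor <;> refine Set.mem_iUnion.mpr ⟨m + 1, ?_⟩ <;> rw [hrec m]
      · exact Or.inr (Set.mem_biUnion (Finset.mem_coe.mpr hf)
          (Or.inl ⟨v, hm, rfl⟩))
      · exact Or.inr (Set.mem_biUnion (Finset.mem_coe.mpr hf)
          (Or.inr ⟨v, hm, rfl⟩))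
    let H : Subgroup C.MCG :=
      { carrier := {h | ∀ v ∈ U, C.act h v ∈ U ∧ C.act h⁻¹ v ∈ U}
        one_mem' := by
          intro v hv
          rw [inv_one, map_one]
          exact ⟨hv, hv⟩
        mul_mem' := by
          intro a b ha hb v hv
          constructor
          · rw [map_mul, Equiv.Perm.mul_apply]
            exact (ha _ (hb v hv).1).1
          · rw [mul_inv_rev, map_mul, Equiv.Perm.mul_apply]
            exact (hb _ (ha v hv).2).2
        inv_mem' := by
          intro a ha v hv
          refine ⟨(ha v hv).2, ?_⟩
          rw [inv_inv]
          exact (ha v hv).1 }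
    have hcl : Subgroup.closure (G : Set C.MCG) ≤ H :=
      (Subgroup.closure_le H).mpr (fun f hf => hGU f hf)
    rw [hGen] at hcl
    apply Set.eq_univ_of_forall
    intro t
    obtain ⟨b, hbB, h, hhb⟩ := htype t
    have hbU : b ∈ U := Set.mem_iUnion.mpr ⟨0, hE0 ▸ hbB⟩
    have := (hcl (Subgroup.mem_top h) b hbU).1
    rwa [hhb] at this
  refine ⟨?_, key⟩
  let E : ℕ → Set C.V := fun m => Nat.rec B
    (fun _ Em => Em ∪ ⋃ f ∈ (G : Set C.MCG),
      (⇑(C.act f) '' Em ∪ ⇑(C.act f⁻¹) '' Em)) m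
  obtain ⟨h1, h2, h3⟩ := key E rfl (fun m => rfl)
  exact ⟨E, h1, h2, h3⟩
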